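/- arXiv:1711.05650 — 3 statements merged into one kernel-verified Lean document; each statement's English description precedes it below -/
import Mathlib

section
/- Let W and Ŵ be independent Gamma-distributed random variables with shape parameters m and m̂ (positive integers) and scale parameters Ω and Ω̂ respectively. Then the probability density function of the product Z = W·Ŵ is f(x) = (2 x^{(m+m̂)/2 − 1}) / (Γ(m) Γ(m̂) (Ω Ω̂)^{(m+m̂)/2}) · K_{m−m̂}(√(4x/(Ω Ω̂))) for x > 0, where K_ν is the modified Bessel function of the second kind. -/
/-!
By independence, the law of `W * V` is the multiplicative convolution of the two Gamma laws,
whose density at `z` is `∫ f_W(x) f_V(z / x) / |x| dx`. For `z > 0` and Gamma densities this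
integrand is a constant times `x ^ (m - mh - 1) * exp (-(x / Ω₁ + z / (Ω₂ x)))` on `x > 0`, and
the substitution `x = √(z Ω₁ / Ω₂) t` turns it into the integral defining
`K_{m - mh} (2 √(z / (Ω₁ Ω₂)))`.
-/

open MeasureTheory ProbabilityTheory Real Set

noncomputable def besselK (ν x : ℝ) : ℝ :=
  (1 / 2) * ∫ t in Ioi (0 : ℝ), t ^ (ν - 1) * Real.exp (-(x / 2) * (t + 1 / t))

open scoped ENNReal

lemma lintegral_comp_mul_left {g : ℝ → ℝ≥0∞} (hg : Measurable g) {a : ℝ} (ha : a ≠ 0) :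
    ∫⁻ y, g (a * y) = ENNReal.ofReal |a⁻¹| * ∫⁻ x, g x := by
  rw [← lintegral_map hg (measurable_const_mul a), Real.map_volume_mul_left ha,
    lintegral_smul_measure, smul_eq_mul]

theorem mconv_withDensity_eq_withDensity_lintegral {f g : ℝ → ℝ≥0∞}
    (hf : Measurable f) (hg : Measurable g) :
    volume.withDensity f ∗ₘ volume.withDensity g =
      volume.withDensity (fun z ↦ ∫⁻ x, f x * ENNReal.ofReal |x|⁻¹ * g (z / x)) := by
  refine Measure.ext_of_lintegral _ fun φ hφ ↦ ?_
  have inner : ∀ᵐ x : ℝ, ∫⁻ y, g y * φ (x * y) =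
      ∫⁻ z, ENNReal.ofReal |x|⁻¹ * (g (z / x) * φ z) := by
    filter_upwards [compl_mem_ae_iff.2 (measure_singleton (0 : ℝ))] with x (hx : x ≠ 0)
    have := lintegral_comp_mul_left (g := fun z ↦ g (z / x) * φ z) (by fun_prop) hx
    simp only [mul_div_cancel_left₀ _ hx, abs_inv] at this
    rw [this, lintegral_const_mul _ (by fun_prop)]
  calc ∫⁻ z, φ z ∂(volume.withDensity f ∗ₘ volume.withDensity g)
      = ∫⁻ x, f x * ∫⁻ y, g y * φ (x * y) := by
        rw [Measure.lintegral_mconv hφ, lintegral_withDensity_eq_lintegral_mul _ hf (by fun_prop)]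
        exact lintegral_congr fun x ↦ by
          rw [Pi.mul_apply, lintegral_withDensity_eq_lintegral_mul _ hg (by fun_prop)]; rfl
    _ = ∫⁻ x, ∫⁻ z, f x * ENNReal.ofReal |x|⁻¹ * g (z / x) * φ z := by
        refine lintegral_congr_ae ?_
        filter_upwards [inner] with x hx
        rw [hx, ← lintegral_const_mul _ (by fun_prop)]
        simp only [mul_assoc]
    _ = ∫⁻ z, (∫⁻ x, f x * ENNReal.ofReal |x|⁻¹ * g (z / x)) * φ z := by
        rw [lintegral_lintegral_swap (by fun_prop)]
        exact lintegral_congr fun z ↦ lintegral_mul_const _ (by fun_prop)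
    _ = _ := by
        rw [lintegral_withDensity_eq_lintegral_mul _ (by fun_prop) hφ]
        rfl

lemma exp_neg_div_le_factorial_mul_pow {β x : ℝ} (hβ : 0 < β) (hx : 0 < x) (k : ℕ) :
    exp (-(β / x)) ≤ k.factorial * (x / β) ^ k := by
  have h := pow_div_factorial_le_exp (β / x) (by positivity) k
  rw [div_le_iff₀ (by positivity)] at h
  rw [exp_neg, inv_le_iff_one_le_mul₀ (exp_pos _)]
  calc (1 : ℝ)
      = (x / β) ^ k * (β / x) ^ k := by
        rw [← mul_pow, div_mul_div_cancel₀ hβ.ne', div_self hx.ne', one_pow]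
    _ ≤ (x / β) ^ k * (exp (β / x) * k.factorial) := by gcongr
    _ = _ := by ring

lemma integrableOn_rpow_mul_exp_neg_mul_add_div (p : ℝ) {α β : ℝ} (hα : 0 < α) (hβ : 0 < β) :
    IntegrableOn (fun x ↦ x ^ p * exp (-(α * x + β / x))) (Ioi 0) := by
  obtain ⟨k, hk⟩ : ∃ k : ℕ, -1 < p + k := ⟨⌈-p⌉₊, by linarith [Nat.le_ceil (-p)]⟩
  have hdom : IntegrableOn (fun x ↦ k.factorial / β ^ k * (x ^ (p + k) * exp (-(α * x))))
      (Ioi 0) := by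
    have := integrableOn_rpow_mul_exp_neg_mul_rpow hk zero_lt_one hα
    simp only [rpow_one, neg_mul] at this
    exact this.const_mul _
  refine hdom.mono' (by fun_prop) ?_
  filter_upwards [ae_restrict_mem measurableSet_Ioi] with x (hx : 0 < x)
  rw [norm_of_nonneg (by positivity), neg_add, exp_add, rpow_add hx, rpow_natCast]
  calc x ^ p * (exp (-(α * x)) * exp (-(β / x)))
      ≤ x ^ p * (exp (-(α * x)) * (k.factorial * (x / β) ^ k)) := by
        gcongr; exact exp_neg_div_le_factorial_mul_pow hβ hx k
    _ = _ := by rw [div_pow]; ring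

theorem integral_rpow_mul_exp_neg_mul_add_div (p : ℝ) {α β : ℝ} (hα : 0 < α) (hβ : 0 < β) :
    ∫ x in Ioi 0, x ^ (p - 1) * exp (-(α * x + β / x)) =
      2 * (β / α) ^ (p / 2) * besselK p (2 * √(α * β)) := by
  set c := √(β / α) with hc_def
  have hc : 0 < c := sqrt_pos.2 (div_pos hβ hα)
  have hαc : α * c = √(α * β) := by
    rw [hc_def, ← sqrt_sq hα.le, ← sqrt_mul (sq_nonneg _), sqrt_sq hα.le]
    congr 1; field_simp
  have hβc : β / c = √(α * β) := by
    rw [div_eq_iff hc.ne', ← hαc]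
    rw [hc_def, mul_assoc, mul_self_sqrt (div_pos hβ hα).le]; field_simp
  have hsubst : ∀ t ∈ Ioi (0 : ℝ), (c * t) ^ (p - 1) * exp (-(α * (c * t) + β / (c * t))) =
      c ^ (p - 1) * (t ^ (p - 1) * exp (-(2 * √(α * β) / 2) * (t + 1 / t))) := by
    intro t (ht : 0 < t)
    rw [mul_rpow hc.le ht.le, ← mul_assoc, hαc, div_mul_eq_div_div_swap, div_right_comm, hβc]
    ring_nf
  have hcp : c * c ^ (p - 1) = (β / α) ^ (p / 2) := by
    rw [mul_comm, ← rpow_add_one hc.ne', sub_add_cancel, hc_def, sqrt_eq_rpow, ← rpow_mul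
      (div_pos hβ hα).le, one_div_mul_eq_div]
  have hscale := integral_comp_mul_left_Ioi
    (fun x ↦ x ^ (p - 1) * exp (-(α * x + β / x))) 0 hc
  rw [mul_zero, smul_eq_mul, setIntegral_congr_fun measurableSet_Ioi hsubst,
    integral_const_mul, eq_inv_mul_iff_mul_eq₀ hc.ne'] at hscale
  rw [← hscale, besselK, ← mul_assoc, hcp]
  ring

noncomputable def gammaProductPDFReal (a b r₁ r₂ z : ℝ) : ℝ :=
  if 0 < z then
    2 * (r₁ * r₂) ^ ((a + b) / 2) * z ^ ((a + b) / 2 - 1) / (Gamma a * Gamma b) *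
      besselK (a - b) (2 * √(r₁ * r₂ * z))
  else 0

lemma gammaPDF_mul_gammaPDF_div_eq_indicator {a b r₁ r₂ z : ℝ} (ha : 0 < a) (hb : 0 < b)
    (hr₁ : 0 < r₁) (hr₂ : 0 < r₂) (hz : 0 < z) (x : ℝ) :
    gammaPDF a r₁ x * ENNReal.ofReal |x|⁻¹ * gammaPDF b r₂ (z / x) =
      (Ioi 0).indicator (fun x ↦ ENNReal.ofReal (r₁ ^ a * r₂ ^ b * z ^ (b - 1) /
        (Gamma a * Gamma b) * (x ^ (a - b - 1) * exp (-(r₁ * x + r₂ * z / x))))) x := by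
  rcases lt_trichotomy x 0 with hx | rfl | hx
  · rw [gammaPDF_of_neg hx, zero_mul, zero_mul, indicator_of_notMem (by simpa using hx.le)]
  · simp
  have := Gamma_pos_of_pos ha
  have := Gamma_pos_of_pos hb
  rw [indicator_of_mem (mem_Ioi.2 hx), gammaPDF_of_nonneg hx.le,
    gammaPDF_of_nonneg (div_pos hz hx).le, ← ENNReal.ofReal_mul (by positivity),
    ← ENNReal.ofReal_mul (by positivity), abs_of_pos hx]
  congr 1
  rw [show a - b - 1 = a - 1 - (b - 1) - 1 by ring, rpow_sub_one hx.ne' (a - 1 - (b - 1)),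
    rpow_sub hx (a - 1), div_rpow hz.le hx.le, neg_add, exp_add, mul_div_assoc]
  field_simp

lemma gammaPDF_mul_gammaPDF_div_of_neg (a b r₁ r₂ : ℝ) {z : ℝ} (hz : z < 0) (x : ℝ) :
    gammaPDF a r₁ x * ENNReal.ofReal |x|⁻¹ * gammaPDF b r₂ (z / x) = 0 := by
  rcases lt_trichotomy x 0 with hx | rfl | hx
  · rw [gammaPDF_of_neg hx, zero_mul, zero_mul]
  · simp
  · rw [gammaPDF_of_neg (div_neg_of_neg_of_pos hz hx), mul_zero]

theorem lintegral_gammaPDF_mul_gammaPDF_div {a b r₁ r₂ z : ℝ} (ha : 0 < a) (hb : 0 < b)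
    (hr₁ : 0 < r₁) (hr₂ : 0 < r₂) (hz : 0 < z) :
    ∫⁻ x, gammaPDF a r₁ x * ENNReal.ofReal |x|⁻¹ * gammaPDF b r₂ (z / x) =
      ENNReal.ofReal (gammaProductPDFReal a b r₁ r₂ z) := by
  have hβ : 0 < r₂ * z := mul_pos hr₂ hz
  simp_rw [gammaPDF_mul_gammaPDF_div_eq_indicator ha hb hr₁ hr₂ hz]
  rw [lintegral_indicator measurableSet_Ioi, ← ofReal_integral_eq_lintegral_ofReal
    ((integrableOn_rpow_mul_exp_neg_mul_add_div _ hr₁ hβ).const_mul _), integral_const_mul,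
    integral_rpow_mul_exp_neg_mul_add_div _ hr₁ hβ, gammaProductPDFReal, if_pos hz, ← mul_assoc r₁]
  · have hpow : r₁ ^ a * r₂ ^ b * z ^ (b - 1) * (r₂ * z / r₁) ^ ((a - b) / 2) =
        (r₁ * r₂) ^ ((a + b) / 2) * z ^ ((a + b) / 2 - 1) := by
      calc _ = r₁ ^ a / r₁ ^ ((a - b) / 2) * (r₂ ^ b * r₂ ^ ((a - b) / 2)) *
            (z ^ (b - 1) * z ^ ((a - b) / 2)) := by
            rw [div_rpow hβ.le hr₁.le, mul_rpow hr₂.le hz.le]; ring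
        _ = _ := by
            rw [← rpow_sub hr₁, ← rpow_add hr₂, ← rpow_add hz, mul_rpow hr₁.le hr₂.le]
            ring_nf
    rw [mul_assoc 2 ((r₁ * r₂) ^ ((a + b) / 2)), ← hpow]
    congr 1
    ring
  · filter_upwards [ae_restrict_mem measurableSet_Ioi] with x (hx : 0 < x)
    positivity

theorem gammaMeasure_mconv_gammaMeasure {a b r₁ r₂ : ℝ} (ha : 0 < a) (hb : 0 < b)
    (hr₁ : 0 < r₁) (hr₂ : 0 < r₂) :
    gammaMeasure a r₁ ∗ₘ gammaMeasure b r₂ =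
      volume.withDensity (fun z ↦ ENNReal.ofReal (gammaProductPDFReal a b r₁ r₂ z)) := by
  rw [gammaMeasure, gammaMeasure, mconv_withDensity_eq_withDensity_lintegral
    (f := gammaPDF a r₁) (g := gammaPDF b r₂) (measurable_gammaPDFReal _ _).ennreal_ofReal
    (measurable_gammaPDFReal _ _).ennreal_ofReal]
  refine withDensity_congr_ae ?_
  filter_upwards [compl_mem_ae_iff.2 (measure_singleton (0 : ℝ))] with z (hz : z ≠ 0)
  rcases hz.lt_or_gt with hz | hz
  · simp only [gammaPDF_mul_gammaPDF_div_of_neg a b r₁ r₂ hz, lintegral_zero,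
      gammaProductPDFReal, if_neg (not_lt.2 hz.le), ENNReal.ofReal_zero]
  · exact lintegral_gammaPDF_mul_gammaPDF_div ha hb hr₁ hr₂ hz

/-- PDF of the product of two independent Gamma random variables
`W ~ Gamma(m, scale Ω₁)` and `V ~ Gamma(mh, scale Ω₂)`. -/
theorem product_gamma_pdf
    {α : Type*} [MeasurableSpace α] (μ : Measure α) [IsProbabilityMeasure μ]
    (W V : α → ℝ) (hWm : Measurable W) (hVm : Measurable V)
    (m mh : ℕ) (hm : 0 < m) (hmh : 0 < mh)
    (Ω₁ Ω₂ : ℝ) (hΩ₁ : 0 < Ω₁) (hΩ₂ : 0 < Ω₂)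
    (hW : μ.map W = gammaMeasure m (1 / Ω₁))
    (hV : μ.map V = gammaMeasure mh (1 / Ω₂))
    (hindep : IndepFun W V μ) :
    μ.map (fun ω => W ω * V ω) =
      volume.withDensity (fun x => ENNReal.ofReal (if 0 < x then
        2 * x ^ (((m : ℝ) + mh) / 2 - 1) /
          ((Nat.factorial (m - 1)) * (Nat.factorial (mh - 1)) *
            (Ω₁ * Ω₂) ^ (((m : ℝ) + mh) / 2)) *
          besselK ((m : ℝ) - mh) (Real.sqrt (4 * x / (Ω₁ * Ω₂)))
        else 0)) := by
  have hΓ : ∀ n : ℕ, 0 < n → Gamma n = (n - 1).factorial := fun n hn ↦ by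
    rw [← Gamma_nat_eq_factorial, Nat.cast_pred hn, sub_add_cancel]
  have hΩ : 0 < Ω₁ * Ω₂ := mul_pos hΩ₁ hΩ₂
  rw [show (fun ω ↦ W ω * V ω) = W * V from rfl, hindep.map_mul_eq_map_mconv_map hWm hVm, hW, hV,
    gammaMeasure_mconv_gammaMeasure (by positivity) (by positivity) (by positivity)
      (by positivity)]
  congr 2 with x
  rw [gammaProductPDFReal]
  split_ifs with hx
  · have hsqrt : 2 * √(1 / Ω₁ * (1 / Ω₂) * x) = √(4 * x / (Ω₁ * Ω₂)) := by
      rw [show 4 * x / (Ω₁ * Ω₂) = 2 ^ 2 * (1 / Ω₁ * (1 / Ω₂) * x) by field_simp; ring,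
        sqrt_mul (by positivity : (0 : ℝ) ≤ 2 ^ 2), sqrt_sq zero_le_two]
    rw [hΓ m hm, hΓ mh hmh, hsqrt, one_div_mul_one_div, one_div, inv_rpow hΩ.le]
    field_simp
  · rfl
end

section
/- For integers q ≥ 1 and p ≥ 0, ∫_0^∞ t^{2q+p−1} K_p(t) dt = 2^{p+2q−2} (q−1)! (p+q−1)!, where K_p is the modified Bessel function of the second kind of integer order p. -/
open MeasureTheory Real Set

/-!
Substituting `s = 2w/t` in the integral defining `K_ν` gives
`t^(μ-1) K_ν(t) = 2^(ν-1) ∫ w^(ν-1) e^(-w) t^(μ-ν-1) e^(-t²/4w) dw`.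
After exchanging the integrals, the `t`-integral is a Gaussian moment, equal to
`2^(μ-ν-1) Γ((μ-ν)/2) w^((μ-ν)/2)`, and the remaining `w`-integral is `Γ((μ+ν)/2)`.
So `∫ t^(μ-1) K_ν(t) dt = 2^(μ-2) Γ((μ-ν)/2) Γ((μ+ν)/2)` whenever `μ > |ν|`;
the theorem is the case `μ = 2q + p`, `ν = p`.
-/

theorem besselK_eq_rpow_mul_integral (ν : ℝ) {t : ℝ} (ht : 0 < t) :
    besselK ν t = 2 ^ (ν - 1) * t ^ (-ν) *
      ∫ w in Ioi (0 : ℝ), w ^ (ν - 1) * exp (-w) * exp (-(4 * w)⁻¹ * t ^ 2) := by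
  have hc : 0 < 2 / t := by positivity
  have hsubst := integral_comp_mul_left_Ioi
    (fun s => s ^ (ν - 1) * exp (-(t / 2) * (s + 1 / s))) 0 hc
  rw [mul_zero, smul_eq_mul, eq_inv_mul_iff_mul_eq₀ hc.ne'] at hsubst
  rw [besselK, ← hsubst, ← integral_const_mul, ← integral_const_mul, ← integral_const_mul]
  refine setIntegral_congr_fun measurableSet_Ioi fun w (hw : 0 < w) => ?_
  have hexp : -(t / 2) * (2 / t * w + 1 / (2 / t * w)) = -w + -(4 * w)⁻¹ * t ^ 2 := by
    field_simp
    ring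
  have hpow : 2 / t * (2 / t * w) ^ (ν - 1) = 2 ^ ν * t ^ (-ν) * w ^ (ν - 1) := by
    rw [mul_rpow hc.le hw.le, div_rpow zero_le_two ht.le, rpow_sub_one two_ne_zero,
      rpow_sub_one ht.ne', rpow_neg ht.le]
    field_simp
  simp only [hexp, exp_add]
  rw [rpow_sub_one two_ne_zero]
  linear_combination (exp (-w) * exp (-(4 * w)⁻¹ * t ^ 2) / 2) * hpow

theorem integral_rpow_mul_exp_neg_mul_sq_Ioi {s b : ℝ} (hs : 0 < s) (hb : 0 < b) :
    ∫ t in Ioi (0 : ℝ), t ^ (s - 1) * exp (-b * t ^ 2) =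
      b ^ (-(s / 2)) / 2 * Gamma (s / 2) := by
  simp_rw [← rpow_two]
  rw [integral_rpow_mul_exp_neg_mul_rpow two_pos (by linarith) hb]
  ring_nf

theorem integral_rpow_mul_besselK_integrand {a : ℝ} (ν : ℝ) (ha : 0 < a) {w : ℝ} (hw : 0 < w) :
    ∫ t in Ioi (0 : ℝ), t ^ (a - 1) * (w ^ (ν - 1) * exp (-w) * exp (-(4 * w)⁻¹ * t ^ 2)) =
      2 ^ (a - 1) * Gamma (a / 2) * (exp (-w) * w ^ (a / 2 + ν - 1)) := by
  have h4w : 0 < 4 * w := by positivity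
  simp_rw [mul_left_comm _ (w ^ (ν - 1) * exp (-w))]
  rw [integral_const_mul, integral_rpow_mul_exp_neg_mul_sq_Ioi ha (inv_pos.2 h4w),
    inv_rpow h4w.le, ← rpow_neg h4w.le, neg_neg, mul_rpow (by norm_num) hw.le,
    show (4 : ℝ) = 2 ^ (2 : ℝ) by norm_num, ← rpow_mul zero_le_two,
    show a / 2 + ν - 1 = (ν - 1) + a / 2 by ring, rpow_add hw, rpow_sub_one two_ne_zero]
  ring_nf

theorem integrable_besselK_integrand {a ν : ℝ} (ha : 0 < a) (hν : 0 < a / 2 + ν) :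
    Integrable (Function.uncurry fun t w : ℝ =>
        t ^ (a - 1) * (w ^ (ν - 1) * exp (-w) * exp (-(4 * w)⁻¹ * t ^ 2)))
      ((volume.restrict (Ioi 0)).prod (volume.restrict (Ioi 0))) := by
  refine (integrable_prod_iff' (Measurable.aestronglyMeasurable (by fun_prop))).2
    ⟨(ae_restrict_iff' measurableSet_Ioi).2 (.of_forall fun w (hw : 0 < w) => ?_), ?_⟩
  · simp_rw [Function.uncurry_apply_pair, mul_left_comm _ (w ^ (ν - 1) * exp (-w))]
    exact (integrableOn_rpow_mul_exp_neg_mul_sq (by positivity) (by linarith)).const_mul _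
  · refine ((GammaIntegral_convergent hν).const_mul (2 ^ (a - 1) * Gamma (a / 2))).congr
      ((ae_restrict_iff' measurableSet_Ioi).2 (.of_forall fun w (hw : 0 < w) => ?_))
    dsimp only
    rw [← integral_rpow_mul_besselK_integrand ν ha hw]
    refine setIntegral_congr_fun measurableSet_Ioi fun t (ht : 0 < t) => ?_
    rw [Function.uncurry_apply_pair, norm_of_nonneg (by positivity)]

theorem integral_rpow_mul_besselK {μ ν : ℝ} (hμν : ν < μ) (hμν' : -ν < μ) :
    ∫ t in Ioi (0 : ℝ), t ^ (μ - 1) * besselK ν t =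
      2 ^ (μ - 2) * Gamma ((μ - ν) / 2) * Gamma ((μ + ν) / 2) := by
  have ha : 0 < μ - ν := by linarith
  have hb : 0 < (μ - ν) / 2 + ν := by linarith
  calc ∫ t in Ioi (0 : ℝ), t ^ (μ - 1) * besselK ν t
      = ∫ t in Ioi (0 : ℝ), 2 ^ (ν - 1) * ∫ w in Ioi (0 : ℝ),
          t ^ (μ - ν - 1) * (w ^ (ν - 1) * exp (-w) * exp (-(4 * w)⁻¹ * t ^ 2)) := by
        refine setIntegral_congr_fun measurableSet_Ioi fun t (ht : 0 < t) => ?_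
        rw [besselK_eq_rpow_mul_integral ν ht, integral_const_mul,
          show μ - ν - 1 = (μ - 1) + -ν by ring, rpow_add ht]
        ring
    _ = 2 ^ (ν - 1) * ∫ w in Ioi (0 : ℝ), ∫ t in Ioi (0 : ℝ),
          t ^ (μ - ν - 1) * (w ^ (ν - 1) * exp (-w) * exp (-(4 * w)⁻¹ * t ^ 2)) := by
        rw [integral_const_mul, integral_integral_swap (integrable_besselK_integrand ha hb)]
    _ = 2 ^ (ν - 1) * ∫ w in Ioi (0 : ℝ), 2 ^ (μ - ν - 1) * Gamma ((μ - ν) / 2) *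
          (exp (-w) * w ^ ((μ - ν) / 2 + ν - 1)) := by
        congr 1
        exact setIntegral_congr_fun measurableSet_Ioi fun w (hw : 0 < w) =>
          integral_rpow_mul_besselK_integrand ν ha hw
    _ = 2 ^ (μ - 2) * Gamma ((μ - ν) / 2) * Gamma ((μ + ν) / 2) := by
        rw [integral_const_mul, ← Gamma_eq_integral hb, ← mul_assoc, ← mul_assoc,
          ← rpow_add two_pos]
        ring_nf

/-- `∫_0^∞ t^(2q+p-1) K_p(t) dt = 2^(p+2q-2) (q-1)! (p+q-1)!`. -/
theorem integral_power_besselK (q p : ℕ) (hq : 1 ≤ q) :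
    ∫ t in Ioi (0 : ℝ), t ^ (2 * q + p - 1) * besselK p t =
      2 ^ (p + 2 * q - 2) * (Nat.factorial (q - 1)) * (Nat.factorial (p + q - 1)) := by
  have hq_pos : (0 : ℝ) < q := by exact_mod_cast hq
  have hμ : ((2 * q + p - 1 : ℕ) : ℝ) = (2 * q + p : ℝ) - 1 := by
    push_cast [show 1 ≤ 2 * q + p by omega]; ring
  have h2 : ((p + 2 * q - 2 : ℕ) : ℝ) = (2 * q + p : ℝ) - 2 := by
    push_cast [show 2 ≤ p + 2 * q by omega]; ring
  have hΓq : ((q - 1 : ℕ) : ℝ) + 1 = (2 * q + p - p) / 2 := by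
    push_cast [hq]; ring
  have hΓpq : ((p + q - 1 : ℕ) : ℝ) + 1 = (2 * q + p + p) / 2 := by
    push_cast [show 1 ≤ p + q by omega]; ring
  simp_rw [← rpow_natCast, hμ, h2, ← Gamma_nat_eq_factorial, hΓq, hΓpq]
  exact integral_rpow_mul_besselK (by linarith) (by linarith)
end

section
/- Fix μ ≥ 1 an integer and K > 0. For every integer m > μ there exists κ > K such that e^{−K}(K+1) = (κ+1) (m/(μκ+m))^{m/μ}; that is, the equation (κ+1)(m/(μκ+m))^{m/μ} = e^{−K}(K+1) in κ has a solution κ > K. -/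
open Real Filter Topology Set

/-! With `c = m / μ > 1` the right-hand side is `f κ = (κ + 1) (c / (κ + c)) ^ c`.
At `κ = K` it exceeds `e^{-K} (K + 1)` because `(1 + K / c) ^ c < e^K`, and it tends to `0`
because `f κ ≤ c ^ c (κ + c) ^ (1 - c)`; the intermediate value theorem on `[K, b]` for `b` large
gives the solution. -/

theorem Real.one_add_div_rpow_lt_exp {c x : ℝ} (hc : 0 < c) (hx : x ≠ 0) (hxc : -c ≤ x) :
    (1 + x / c) ^ c < exp x := by
  have hbase : 0 ≤ 1 + x / c := by
    rw [← neg_le_iff_add_nonneg', le_div_iff₀ hc]; linarith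
  calc (1 + x / c) ^ c < exp (x / c) ^ c := by
        gcongr; linarith [add_one_lt_exp (div_ne_zero hx hc.ne')]
    _ = exp x := by rw [← exp_mul, div_mul_cancel₀ x hc.ne']

theorem Real.exp_neg_lt_div_add_rpow {c x : ℝ} (hc : 0 < c) (hx : x ≠ 0) (hxc : -c < x) :
    exp (-x) < (c / (x + c)) ^ c := by
  have hbase : 0 < 1 + x / c := by
    rw [← neg_lt_iff_pos_add', lt_div_iff₀ hc]; linarith
  have hinv : c / (x + c) = (1 + x / c)⁻¹ := by
    field_simp; ring
  rw [exp_neg, hinv, inv_rpow hbase.le]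
  exact inv_strictAnti₀ (by positivity) (one_add_div_rpow_lt_exp hc hx hxc.le)

theorem Real.add_one_mul_div_add_rpow_le {c x : ℝ} (hc : 1 ≤ c) (hx : 0 ≤ x) :
    (x + 1) * (c / (x + c)) ^ c ≤ c ^ c * (x + c) ^ (1 - c) := by
  have hxc : 0 < x + c := by linarith
  calc (x + 1) * (c / (x + c)) ^ c ≤ (x + c) * (c ^ c / (x + c) ^ c) := by
        rw [div_rpow (by linarith) hxc.le]; gcongr
    _ = c ^ c * (x + c) ^ (1 - c) := by
        rw [rpow_sub hxc, rpow_one]; ring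

theorem Real.tendsto_add_one_mul_div_add_rpow_atTop {c : ℝ} (hc : 1 < c) :
    Tendsto (fun x => (x + 1) * (c / (x + c)) ^ c) atTop (𝓝 0) := by
  have hbound : Tendsto (fun x : ℝ => c ^ c * (x + c) ^ (1 - c)) atTop (𝓝 0) := by
    have := (tendsto_rpow_neg_atTop (sub_pos.2 hc)).comp (tendsto_atTop_add_const_right _ c tendsto_id)
    simpa [neg_sub] using this.const_mul (c ^ c)
  refine tendsto_of_tendsto_of_tendsto_of_le_of_le' tendsto_const_nhds hbound ?_ ?_
  · filter_upwards [eventually_ge_atTop 0] with x hx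
    have : 0 < x + c := by linarith
    positivity
  · filter_upwards [eventually_ge_atTop 0] with x hx
    exact add_one_mul_div_add_rpow_le hc.le hx

theorem Real.exists_gt_add_one_mul_div_add_rpow_eq {c K : ℝ} (hc : 1 < c) (hK : 0 < K) :
    ∃ κ, K < κ ∧ exp (-K) * (K + 1) = (κ + 1) * (c / (κ + c)) ^ c := by
  set f : ℝ → ℝ := fun x => (x + 1) * (c / (x + c)) ^ c
  have hT : 0 < exp (-K) * (K + 1) := by positivity
  obtain ⟨b, hKb, hfb⟩ := ((eventually_ge_atTop K).and
    ((tendsto_add_one_mul_div_add_rpow_atTop hc).eventually (gt_mem_nhds hT))).exists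
  have hfK : exp (-K) * (K + 1) < f K := by
    rw [mul_comm]
    exact mul_lt_mul_of_pos_left (exp_neg_lt_div_add_rpow (by linarith) hK.ne' (by linarith))
      (by linarith)
  have hcont : ContinuousOn f (Icc K b) := by
    refine continuousOn_id.add continuousOn_const |>.mul ?_
    refine (continuousOn_const.div (continuousOn_id.add continuousOn_const) ?_).rpow_const ?_
    · intro x hx h0; simp only [Pi.add_apply, id] at h0; linarith [hx.1]
    · intro _ _; exact Or.inr (by linarith)
  obtain ⟨κ, hκ, hfκ⟩ := intermediate_value_Ioc' hKb hcont ⟨hfb.le, hfK⟩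
  exact ⟨κ, hκ.1, hfκ.symm⟩

/-- For fixed integer `μ ≥ 1`, `K > 0` and any integer `m > μ`, the equation
`(κ+1)(m/(μκ+m))^(m/μ) = e^{-K}(K+1)` has a solution `κ > K`. -/
theorem exists_kappa_matching_asymptote
    (μ m : ℕ) (hμ : 1 ≤ μ) (hm : μ < m) (K : ℝ) (hK : 0 < K) :
    ∃ κ : ℝ, K < κ ∧
      Real.exp (-K) * (K + 1) =
        (κ + 1) * ((m : ℝ) / ((μ : ℝ) * κ + m)) ^ ((m : ℝ) / μ) := by
  have hμ₀ : (0 : ℝ) < μ := by exact_mod_cast hμ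
  have hc : 1 < (m : ℝ) / μ := (one_lt_div hμ₀).2 (by exact_mod_cast hm)
  obtain ⟨κ, hKκ, hκ⟩ := exists_gt_add_one_mul_div_add_rpow_eq hc hK
  refine ⟨κ, hKκ, hκ.trans ?_⟩
  congr 2
  field_simp
end
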